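/- arXiv:1102.4587 — 2 statements merged into one kernel-verified Lean document; each statement's English description precedes it below -/
import Mathlib

section
/- For every p ≥ 1 and ε > 0 there exists a constant c = c(p,ε) ≥ 1 such that for every function f : [0,T]^2 → ℝ and every rectangle R ⊆ [0,T]^2, one has |f|_{(p+ε)-var;R} ≤ c(p,ε) · V_p(f;R). -/
open Set
open scoped ENNReal NNReal

/-- A closed rectangle `[a,b] × [c,d] ⊆ ℝ²`, encoded by its four corner coordinates. -/
structure Rect where
  a : ℝ
  b : ℝ
  c : ℝ
  d : ℝ

noncomputable instance : DecidableEq Rect := fun _ _ => Classical.dec _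

/-- The closed rectangle as a subset of the plane. -/
def Rect.toSet (R : Rect) : Set (ℝ × ℝ) := Set.Icc R.a R.b ×ˢ Set.Icc R.c R.d

/-- The open interior of the rectangle. -/
def Rect.openSet (R : Rect) : Set (ℝ × ℝ) := Set.Ioo R.a R.b ×ˢ Set.Ioo R.c R.d

/-- The rectangle is well formed: `a ≤ b`, `c ≤ d`. -/
def Rect.Valid (R : Rect) : Prop := R.a ≤ R.b ∧ R.c ≤ R.d

/-- Rectangular increment of `f` over `[a,b] × [c,d]`. -/
def Rect.inc (f : ℝ × ℝ → ℝ) (R : Rect) : ℝ :=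
  f (R.b, R.d) - f (R.a, R.d) - f (R.b, R.c) + f (R.a, R.c)

/-- `P` is a partition of `R` into essentially disjoint rectangles. -/
def IsPartition (R : Rect) (P : Finset Rect) : Prop :=
  (∀ Q ∈ P, Q.Valid) ∧
  ((P : Set Rect).Pairwise fun Q Q' => Disjoint Q.openSet Q'.openSet) ∧
  (⋃ Q ∈ P, Q.toSet) = R.toSet

/-- The controlled `p`-variation of `f` over `R`, raised to the power `p`:
`sup` over all partitions of `R` into essentially disjoint rectangles of
`Σ |f(A)|^p`.  So `|f|_{p-var;R} = (cVarSum p f R) ^ (1/p)`. -/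
noncomputable def cVarSum (p : ℝ) (f : ℝ × ℝ → ℝ) (R : Rect) : ℝ≥0∞ :=
  ⨆ (P : Finset Rect) (_ : IsPartition R P),
    ∑ Q ∈ P, ENNReal.ofReal |Rect.inc f Q| ^ p

/-- The grid `p`-variation of `f` over `R`, raised to the power `p`:
`sup` over grid-like partitions (products of dissections of the two sides)
of `Σ_{i,j} |f([t_i,t_{i+1}] × [s_j,s_{j+1}])|^p`.
So `V_p(f;R) = (gridVarSum p f R) ^ (1/p)`. -/
noncomputable def gridVarSum (p : ℝ) (f : ℝ × ℝ → ℝ) (R : Rect) : ℝ≥0∞ :=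
  ⨆ (n : ℕ) (m : ℕ) (t : Fin (n+1) → ℝ) (s : Fin (m+1) → ℝ)
    (_ : Monotone t) (_ : Monotone s)
    (_ : t 0 = R.a) (_ : t (Fin.last n) = R.b)
    (_ : s 0 = R.c) (_ : s (Fin.last m) = R.d),
    ∑ i : Fin n, ∑ j : Fin m,
      ENNReal.ofReal |Rect.inc f ⟨t i.castSucc, t i.succ, s j.castSucc, s j.succ⟩| ^ p

/-!
Fix a partition of `R` and let `g = V_p(f;R)`; every increment is at most `g`. The key estimate
is that at most `C (g / v)^r` disjoint subrectangles carry an increment `≥ v`, for any `r > p`.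
In the coordinates given by their `≤ 2N + 2` corners per axis (indices `≤ 2^U`, `U ≈ log N`), each
side of such a rectangle `A` splits into `≤ 2U + 2` dyadic blocks, so `A` contains a dyadic piece
with increment `≥ v / (2U + 2)²`. Among the `(U + 1)²` pairs of block levels, pieces of one level
are distinct cells of a single grid, whence `N (v / U²)^p ≲ U² g^p`. Summing `|f(Q)|^q` over the
dyadic levels `g / 2^(k+1) < |f(Q)| ≤ g / 2^k` then gives a geometric series in `2^(k (r - q))`
with `p < r < q = p + ε`.
-/

namespace Rect

theorem openSet_subset_openSet {A B : Rect} (ha : A.a ≤ B.a) (hb : B.b ≤ A.b) (hc : A.c ≤ B.c)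
    (hd : B.d ≤ A.d) : B.openSet ⊆ A.openSet :=
  prod_mono (Ioo_subset_Ioo ha hb) (Ioo_subset_Ioo hc hd)

theorem openSet_nonempty_of_inc_ne_zero {f : ℝ × ℝ → ℝ} {B : Rect} (hB : B.Valid)
    (h : B.inc f ≠ 0) : B.openSet.Nonempty := by
  obtain ⟨hab, hcd⟩ := hB
  rcases hab.eq_or_lt with hab | hab
  · exact absurd (by simp only [Rect.inc, hab]; ring) h
  rcases hcd.eq_or_lt with hcd | hcd
  · exact absurd (by simp only [Rect.inc, hcd]; ring) h
  exact (nonempty_Ioo.2 hab).prod (nonempty_Ioo.2 hcd)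

theorem le_of_toSet_subset {Q R : Rect} (hQ : Q.Valid) (h : Q.toSet ⊆ R.toSet) :
    R.a ≤ Q.a ∧ Q.b ≤ R.b ∧ R.c ≤ Q.c ∧ Q.d ≤ R.d := by
  have hlow := h (mk_mem_prod (left_mem_Icc.2 hQ.1) (left_mem_Icc.2 hQ.2))
  have hup := h (mk_mem_prod (right_mem_Icc.2 hQ.1) (right_mem_Icc.2 hQ.2))
  exact ⟨hlow.1.1, hup.1.2, hlow.2.1, hup.2.2⟩

theorem sum_range_inc_horizontal (f : ℝ × ℝ → ℝ) (x : ℕ → ℝ) (c d : ℝ) (n : ℕ) :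
    ∑ i ∈ Finset.range n, inc f ⟨x i, x (i + 1), c, d⟩ = inc f ⟨x 0, x n, c, d⟩ := by
  induction n with
  | zero => simp [Rect.inc]
  | succ n ih => rw [Finset.sum_range_succ, ih]; simp only [Rect.inc]; ring

theorem sum_range_inc_vertical (f : ℝ × ℝ → ℝ) (a b : ℝ) (y : ℕ → ℝ) (m : ℕ) :
    ∑ j ∈ Finset.range m, inc f ⟨a, b, y j, y (j + 1)⟩ = inc f ⟨a, b, y 0, y m⟩ := by
  induction m with
  | zero => simp [Rect.inc]
  | succ m ih => rw [Finset.sum_range_succ, ih]; simp only [Rect.inc]; ring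

theorem sum_range_sum_range_inc (f : ℝ × ℝ → ℝ) (x y : ℕ → ℝ) (n m : ℕ) :
    ∑ i ∈ Finset.range n, ∑ j ∈ Finset.range m, inc f ⟨x i, x (i + 1), y j, y (j + 1)⟩ =
      inc f ⟨x 0, x n, y 0, y m⟩ := by
  simp only [sum_range_inc_vertical, sum_range_inc_horizontal]

end Rect

theorem sum_range_le_gridVarSum (p : ℝ) (f : ℝ × ℝ → ℝ) (R : Rect) {t s : ℕ → ℝ}
    (ht : Monotone t) (hs : Monotone s) {n m : ℕ} (ht₀ : t 0 = R.a) (htn : t n = R.b)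
    (hs₀ : s 0 = R.c) (hsm : s m = R.d) :
    ∑ i ∈ Finset.range n, ∑ j ∈ Finset.range m,
        ENNReal.ofReal |Rect.inc f ⟨t i, t (i + 1), s j, s (j + 1)⟩| ^ p ≤
      gridVarSum p f R := by
  refine le_iSup_of_le n <| le_iSup_of_le m <| le_iSup_of_le (t ∘ Fin.val) <|
    le_iSup_of_le (s ∘ Fin.val) <| le_iSup_of_le (ht.comp Fin.val_strictMono.monotone) <|
    le_iSup_of_le (hs.comp Fin.val_strictMono.monotone) <| le_iSup_of_le ht₀ <|
    le_iSup_of_le htn <| le_iSup_of_le hs₀ <| le_iSup_of_le hsm (le_of_eq ?_)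
  simp [Finset.sum_range]

theorem rpow_abs_inc_le_gridVarSum (p : ℝ) (f : ℝ × ℝ → ℝ) {Q R : Rect} (hQ : Q.Valid)
    (hQR : Q.toSet ⊆ R.toSet) : ENNReal.ofReal |Q.inc f| ^ p ≤ gridVarSum p f R := by
  obtain ⟨ha, hb, hc, hd⟩ := Rect.le_of_toSet_subset hQ hQR
  let t : ℕ → ℝ := fun i =>
    if i = 0 then R.a else if i = 1 then Q.a else if i = 2 then Q.b else R.b
  let s : ℕ → ℝ := fun j =>
    if j = 0 then R.c else if j = 1 then Q.c else if j = 2 then Q.d else R.d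
  have ht : Monotone t := monotone_nat_of_le_succ fun i => by
    rcases i with _ | _ | _ | i <;> simp [t] <;> linarith [hQ.1]
  have hs : Monotone s := monotone_nat_of_le_succ fun j => by
    rcases j with _ | _ | _ | j <;> simp [s] <;> linarith [hQ.2]
  let cell : ℕ → ℕ → ℝ≥0∞ := fun i j =>
    ENNReal.ofReal |Rect.inc f ⟨t i, t (i + 1), s j, s (j + 1)⟩| ^ p
  have hrow : cell 1 1 ≤ ∑ j ∈ Finset.range 3, cell 1 j :=
    Finset.single_le_sum (fun _ _ => bot_le) (Finset.mem_range.2 (by norm_num))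
  have hgrid : ∑ j ∈ Finset.range 3, cell 1 j ≤
      ∑ i ∈ Finset.range 3, ∑ j ∈ Finset.range 3, cell i j :=
    Finset.single_le_sum (f := fun i => ∑ j ∈ Finset.range 3, cell i j) (fun _ _ => bot_le)
      (Finset.mem_range.2 (by norm_num))
  exact hrow.trans <| hgrid.trans <| sum_range_le_gridVarSum p f R ht hs rfl rfl rfl rfl

def DyadicChain (k l r s : ℕ) (m : ℕ → ℕ) : Prop :=
  m 0 = l ∧ m s = r ∧ ∀ i < s, ∃ u ≤ k, ∃ j, m i = j * 2 ^ u ∧ m (i + 1) = (j + 1) * 2 ^ u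

namespace DyadicChain

variable {k l r s : ℕ} {m : ℕ → ℕ}

theorem mono (h : DyadicChain k l r s m) {i j : ℕ} (hij : i ≤ j) (hj : j ≤ s) :
    m i ≤ m j := by
  induction j, hij using Nat.le_induction with
  | base => rfl
  | succ j _ ih =>
    obtain ⟨u, -, b, hb, hb'⟩ := h.2.2 j (by omega)
    exact (ih (by omega)).trans (by rw [hb, hb']; gcongr; omega)

theorem le_apply_and_apply_succ_le (h : DyadicChain k l r s m) {i : ℕ} (hi : i < s) :
    l ≤ m i ∧ m (i + 1) ≤ r :=
  ⟨h.1 ▸ h.mono (Nat.zero_le i) hi.le, h.2.1 ▸ h.mono hi le_rfl⟩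

theorem unit_steps (k : ℕ) {l r : ℕ} (hlr : l ≤ r) : DyadicChain k l r (r - l) (l + ·) :=
  ⟨rfl, by simp only; omega, fun i _ => ⟨0, Nat.zero_le k, l + i, by simp, by simp; ring⟩⟩

theorem double (h : DyadicChain k l r s m) :
    DyadicChain (k + 1) (2 * l) (2 * r) s (fun i => 2 * m i) := by
  refine ⟨by simp [h.1], by simp [h.2.1], fun i hi => ?_⟩
  obtain ⟨u, hu, j, hj, hj'⟩ := h.2.2 i hi
  exact ⟨u + 1, by omega, j, by dsimp only; rw [hj]; ring, by dsimp only; rw [hj']; ring⟩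

theorem append {r' s' : ℕ} {m' : ℕ → ℕ} (h : DyadicChain k l r s m)
    (h' : DyadicChain k r r' s' m') :
    DyadicChain k l r' (s + s') (fun i => if i < s then m i else m' (i - s)) := by
  refine ⟨?_, ?_, fun i hi => ?_⟩
  · rcases Nat.eq_zero_or_pos s with hs | hs
    · simp [hs, h'.1, ← h.2.1, h.1]
    · simp [hs, h.1]
  · simp [h'.2.1]
  · by_cases his : i < s
    · obtain ⟨u, hu, j, hj, hj'⟩ := h.2.2 i his
      refine ⟨u, hu, j, by simp [his, hj], ?_⟩
      by_cases hi1 : i + 1 < s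
      · simp [hi1, hj']
      · dsimp only
        rw [if_neg hi1, show i + 1 - s = 0 by omega, h'.1, ← h.2.1, ← hj',
          show i + 1 = s by omega]
    · obtain ⟨u, hu, j, hj, hj'⟩ := h'.2.2 (i - s) (by omega)
      refine ⟨u, hu, j, by simp [his, hj], ?_⟩
      dsimp only
      rw [if_neg (by omega), show i + 1 - s = i - s + 1 by omega, hj']

end DyadicChain

/-- Halving: `[l, r]` is a unit block on each side around the doubled chain of `[⌈l/2⌉, ⌊r/2⌋]`. -/
theorem exists_dyadicChain (k : ℕ) {l r : ℕ} (hlr : l ≤ r) (hr : r ≤ 2 ^ k) :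
    ∃ s m, s ≤ 2 * k + 2 ∧ DyadicChain k l r s m := by
  induction k generalizing l r with
  | zero => exact ⟨r - l, _, by rw [pow_zero] at hr; omega, DyadicChain.unit_steps 0 hlr⟩
  | succ k ih =>
    rcases hlr.eq_or_lt with rfl | hlr
    · refine ⟨0, _, by omega, by simpa using DyadicChain.unit_steps (k + 1) (le_refl l)⟩
    obtain ⟨s, m, hs, hm⟩ := ih (l := (l + 1) / 2) (r := r / 2) (by omega)
      (by rw [pow_succ] at hr; omega)
    have hleft := DyadicChain.unit_steps (k + 1) (show l ≤ 2 * ((l + 1) / 2) by omega)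
    have hright := DyadicChain.unit_steps (k + 1) (show 2 * (r / 2) ≤ r by omega)
    refine ⟨_, _, ?_, (hleft.append hm.double).append hright⟩
    omega

theorem Finset.exists_monotone_nat_enum {α : Type*} [LinearOrder α] (S : Finset α)
    (hS : S.Nonempty) :
    ∃ X : ℕ → α, Monotone X ∧ (∀ i, X i ∈ S) ∧ ∀ z ∈ S, ∃ i < S.card, X i = z := by
  have hpos : 0 < S.card := hS.card_pos
  let e := S.orderEmbOfFin rfl
  refine ⟨fun i => e ⟨min i (S.card - 1), by omega⟩,
    fun i j hij => e.monotone (by simp only [Fin.mk_le_mk]; omega),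
    fun i => S.orderEmbOfFin_mem rfl _, fun z hz => ?_⟩
  obtain ⟨k, rfl⟩ : z ∈ Set.range e := by rw [Finset.range_orderEmbOfFin]; exact hz
  exact ⟨k, k.2, congrArg e (Fin.ext (by simp only; omega))⟩

theorem exists_monotone_nat_through_endpoints {ι : Type*} (F : Finset ι) (lo hi : ι → ℝ)
    {a b : ℝ} (hab : a ≤ b) (hF : ∀ A ∈ F, a ≤ lo A ∧ lo A ≤ hi A ∧ hi A ≤ b) {U : ℕ}
    (hU : 2 * F.card + 2 ≤ 2 ^ U) :
    ∃ X : ℕ → ℝ, Monotone X ∧ X 0 = a ∧ X (2 ^ U) = b ∧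
      ∀ A ∈ F, ∃ i j, i ≤ j ∧ j ≤ 2 ^ U ∧ X i = lo A ∧ X j = hi A := by
  classical
  set S := insert a (insert b (F.image lo ∪ F.image hi))
  have hS : ∀ z ∈ S, a ≤ z ∧ z ≤ b := by
    intro z hz
    simp only [S, Finset.mem_insert, Finset.mem_union, Finset.mem_image] at hz
    rcases hz with rfl | rfl | ⟨A, hA, rfl⟩ | ⟨A, hA, rfl⟩
    · exact ⟨le_rfl, hab⟩
    · exact ⟨hab, le_rfl⟩
    · exact ⟨(hF A hA).1, (hF A hA).2.1.trans (hF A hA).2.2⟩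
    · exact ⟨(hF A hA).1.trans (hF A hA).2.1, (hF A hA).2.2⟩
  have hcard : S.card ≤ 2 ^ U :=
    calc S.card ≤ (insert b (F.image lo ∪ F.image hi)).card + 1 := Finset.card_insert_le _ _
      _ ≤ (F.image lo ∪ F.image hi).card + 2 := by
        linarith [Finset.card_insert_le b (F.image lo ∪ F.image hi)]
      _ ≤ F.card + F.card + 2 := by
        linarith [Finset.card_union_le (F.image lo) (F.image hi), F.card_image_le (f := lo),
          F.card_image_le (f := hi)]
      _ ≤ 2 ^ U := by omega
  obtain ⟨X, hX, hXS, hSX⟩ := S.exists_monotone_nat_enum (Finset.insert_nonempty _ _)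
  have hidx : ∀ z ∈ S, ∃ i ≤ 2 ^ U, X i = z := fun z hz => by
    obtain ⟨i, hi, rfl⟩ := hSX z hz
    exact ⟨i, by omega, rfl⟩
  have mem_lo : ∀ A ∈ F, lo A ∈ S := fun A hA => Finset.mem_insert_of_mem <|
    Finset.mem_insert_of_mem <| Finset.mem_union_left _ (Finset.mem_image_of_mem lo hA)
  have mem_hi : ∀ A ∈ F, hi A ∈ S := fun A hA => Finset.mem_insert_of_mem <|
    Finset.mem_insert_of_mem <| Finset.mem_union_right _ (Finset.mem_image_of_mem hi hA)
  obtain ⟨i₀, -, hi₀⟩ := hidx a (Finset.mem_insert_self a _)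
  obtain ⟨i₁, hi₁, hi₁'⟩ := hidx b (Finset.mem_insert_of_mem (Finset.mem_insert_self b _))
  refine ⟨X, hX, le_antisymm (hi₀ ▸ hX (Nat.zero_le _)) (hS _ (hXS 0)).1,
    le_antisymm (hS _ (hXS _)).2 (hi₁' ▸ hX hi₁), fun A hA => ?_⟩
  obtain ⟨i, -, hXi⟩ := hidx _ (mem_lo A hA)
  obtain ⟨j, hj, hXj⟩ := hidx _ (mem_hi A hA)
  rcases le_total i j with hij | hji
  · exact ⟨i, j, hij, hj, hXi, hXj⟩
  · have hdeg : lo A = hi A := le_antisymm (hF A hA).2.1 (hXj ▸ hXi ▸ hX hji)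
    exact ⟨j, j, le_rfl, hj, hXj.trans hdeg.symm, hXj⟩

def dyadicRect (X Y : ℕ → ℝ) (ux jx uy jy : ℕ) : Rect :=
  ⟨X (jx * 2 ^ ux), X ((jx + 1) * 2 ^ ux), Y (jy * 2 ^ uy), Y ((jy + 1) * 2 ^ uy)⟩

theorem dyadicRect_valid {X Y : ℕ → ℝ} (hX : Monotone X) (hY : Monotone Y) (ux jx uy jy : ℕ) :
    (dyadicRect X Y ux jx uy jy).Valid :=
  ⟨hX (by gcongr; omega), hY (by gcongr; omega)⟩

theorem exists_dyadicRect_le_abs_inc (f : ℝ × ℝ → ℝ) {X Y : ℕ → ℝ} (hX : Monotone X)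
    (hY : Monotone Y) {U l r c d : ℕ} (hlr : l ≤ r) (hr : r ≤ 2 ^ U) (hcd : c ≤ d)
    (hd : d ≤ 2 ^ U) {v : ℝ} (hv : 0 < v) (hA : v ≤ |Rect.inc f ⟨X l, X r, Y c, Y d⟩|) :
    ∃ ux jx uy jy, ux ≤ U ∧ uy ≤ U ∧ (jx + 1) * 2 ^ ux ≤ 2 ^ U ∧ (jy + 1) * 2 ^ uy ≤ 2 ^ U ∧
      (dyadicRect X Y ux jx uy jy).openSet ⊆ (⟨X l, X r, Y c, Y d⟩ : Rect).openSet ∧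
      v / (2 * U + 2) ^ 2 ≤ |(dyadicRect X Y ux jx uy jy).inc f| := by
  obtain ⟨sx, mx, hsx, hmx⟩ := exists_dyadicChain U hlr hr
  obtain ⟨sy, my, hsy, hmy⟩ := exists_dyadicChain U hcd hd
  set cells := Finset.range sx ×ˢ Finset.range sy
  let a : ℕ × ℕ → ℝ := fun ij =>
    |Rect.inc f ⟨X (mx ij.1), X (mx (ij.1 + 1)), Y (my ij.2), Y (my (ij.2 + 1))⟩|
  have hsplit : v ≤ ∑ ij ∈ cells, a ij := by
    calc v ≤ |Rect.inc f ⟨X l, X r, Y c, Y d⟩| := hA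
      _ = |∑ i ∈ Finset.range sx, ∑ j ∈ Finset.range sy,
            Rect.inc f ⟨X (mx i), X (mx (i + 1)), Y (my j), Y (my (j + 1))⟩| := by
        rw [← hmx.1, ← hmx.2.1, ← hmy.1, ← hmy.2.1]
        exact congrArg abs
          (Rect.sum_range_sum_range_inc f (fun i => X (mx i)) (fun j => Y (my j)) sx sy).symm
      _ ≤ ∑ i ∈ Finset.range sx, ∑ j ∈ Finset.range sy,
            |Rect.inc f ⟨X (mx i), X (mx (i + 1)), Y (my j), Y (my (j + 1))⟩| :=
        (Finset.abs_sum_le_sum_abs _ _).trans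
          (Finset.sum_le_sum fun i _ => Finset.abs_sum_le_sum_abs _ _)
      _ = ∑ ij ∈ cells, a ij := by simp only [cells, a, Finset.sum_product]
  have hne : cells.Nonempty := by
    rw [Finset.nonempty_iff_ne_empty]
    intro h
    rw [h, Finset.sum_empty] at hsplit
    linarith
  have havg : ∑ _ij ∈ cells, v / (2 * U + 2) ^ 2 ≤ ∑ ij ∈ cells, a ij := by
    refine le_trans ?_ hsplit
    have hcells : ((sx * sy : ℕ) : ℝ) ≤ (2 * U + 2) ^ 2 := by
      rw [sq]; exact_mod_cast Nat.mul_le_mul hsx hsy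
    rw [Finset.sum_const, Finset.card_product, Finset.card_range, Finset.card_range,
      nsmul_eq_mul, mul_div_assoc']
    exact div_le_of_le_mul₀ (by positivity) hv.le (by nlinarith)
  obtain ⟨⟨i, j⟩, hij, hbig⟩ := Finset.exists_le_of_sum_le hne havg
  simp only [cells, Finset.mem_product, Finset.mem_range] at hij
  obtain ⟨ux, hux, jx, hjx, hjx'⟩ := hmx.2.2 i hij.1
  obtain ⟨uy, huy, jy, hjy, hjy'⟩ := hmy.2.2 j hij.2
  obtain ⟨hli, hir⟩ := hmx.le_apply_and_apply_succ_le hij.1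
  obtain ⟨hcj, hjd⟩ := hmy.le_apply_and_apply_succ_le hij.2
  refine ⟨ux, jx, uy, jy, hux, huy, by omega, by omega,
    Rect.openSet_subset_openSet (hX (hjx ▸ hli)) (hX (hjx' ▸ hir)) (hY (hjy ▸ hcj))
      (hY (hjy' ▸ hjd)), ?_⟩
  rw [show dyadicRect X Y ux jx uy jy = ⟨X (mx i), X (mx (i + 1)), Y (my j), Y (my (j + 1))⟩ by
    rw [dyadicRect, hjx, hjx', hjy, hjy']]
  exact hbig

theorem sum_dyadicRect_le_gridVarSum (p : ℝ) (f : ℝ × ℝ → ℝ) (R : Rect) {X Y : ℕ → ℝ}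
    (hX : Monotone X) (hY : Monotone Y) {U ux uy : ℕ} (hux : ux ≤ U) (huy : uy ≤ U)
    (hX₀ : X 0 = R.a) (hXU : X (2 ^ U) = R.b) (hY₀ : Y 0 = R.c) (hYU : Y (2 ^ U) = R.d)
    (S : Finset (ℕ × ℕ)) (hS : ∀ j ∈ S, (j.1 + 1) * 2 ^ ux ≤ 2 ^ U ∧ (j.2 + 1) * 2 ^ uy ≤ 2 ^ U) :
    ∑ j ∈ S, ENNReal.ofReal |(dyadicRect X Y ux j.1 uy j.2).inc f| ^ p ≤ gridVarSum p f R := by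
  have hpow : ∀ u ≤ U, 2 ^ (U - u) * 2 ^ u = 2 ^ U := fun u hu => by
    rw [← pow_add, Nat.sub_add_cancel hu]
  have hsub : S ⊆ Finset.range (2 ^ (U - ux)) ×ˢ Finset.range (2 ^ (U - uy)) := by
    intro j hj
    rw [Finset.mem_product, Finset.mem_range, Finset.mem_range, Nat.lt_iff_add_one_le,
      Nat.lt_iff_add_one_le]
    obtain ⟨h₁, h₂⟩ := hS j hj
    rw [← hpow ux hux] at h₁
    rw [← hpow uy huy] at h₂
    exact ⟨Nat.le_of_mul_le_mul_right h₁ (by positivity),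
      Nat.le_of_mul_le_mul_right h₂ (by positivity)⟩
  calc _ ≤ ∑ j ∈ Finset.range (2 ^ (U - ux)) ×ˢ Finset.range (2 ^ (U - uy)),
          ENNReal.ofReal |(dyadicRect X Y ux j.1 uy j.2).inc f| ^ p :=
        Finset.sum_le_sum_of_subset hsub
    _ = _ := Finset.sum_product _ _ _
    _ ≤ gridVarSum p f R :=
      sum_range_le_gridVarSum p f R (t := fun i => X (i * 2 ^ ux)) (s := fun j => Y (j * 2 ^ uy))
        (hX.comp fun _ _ h => Nat.mul_le_mul_right _ h)
        (hY.comp fun _ _ h => Nat.mul_le_mul_right _ h)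
        (by simp [hX₀]) (by simp only [hpow ux hux, hXU]) (by simp [hY₀])
        (by simp only [hpow uy huy, hYU])

theorem card_mul_le_gridVarSum {p : ℝ} (hp : 0 ≤ p) (f : ℝ × ℝ → ℝ) {R : Rect} (hR : R.Valid)
    {F : Finset Rect} (hF : ∀ A ∈ F, A.Valid ∧ A.toSet ⊆ R.toSet)
    (hdisj : (F : Set Rect).PairwiseDisjoint Rect.openSet) {v : ℝ} (hv : 0 < v)
    (hbig : ∀ A ∈ F, v ≤ |A.inc f|) {U : ℕ} (hU : 2 * F.card + 2 ≤ 2 ^ U) :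
    F.card * ENNReal.ofReal (v / (2 * U + 2) ^ 2) ^ p ≤ ((U + 1) ^ 2 : ℕ) * gridVarSum p f R := by
  classical
  have hsub := fun A hA => Rect.le_of_toSet_subset (hF A hA).1 (hF A hA).2
  obtain ⟨X, hX, hX₀, hXU, hXF⟩ := exists_monotone_nat_through_endpoints F Rect.a Rect.b hR.1
    (fun A hA => ⟨(hsub A hA).1, (hF A hA).1.1, (hsub A hA).2.1⟩) hU
  obtain ⟨Y, hY, hY₀, hYU, hYF⟩ := exists_monotone_nat_through_endpoints F Rect.c Rect.d hR.2
    (fun A hA => ⟨(hsub A hA).2.2.1, (hF A hA).1.2, (hsub A hA).2.2.2⟩) hU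
  have hpiece : ∀ A ∈ F, ∃ ux jx uy jy, ux ≤ U ∧ uy ≤ U ∧ (jx + 1) * 2 ^ ux ≤ 2 ^ U ∧
      (jy + 1) * 2 ^ uy ≤ 2 ^ U ∧ (dyadicRect X Y ux jx uy jy).openSet ⊆ A.openSet ∧
      v / (2 * U + 2) ^ 2 ≤ |(dyadicRect X Y ux jx uy jy).inc f| := by
    intro A hA
    obtain ⟨l, r, hlr, hr, hl, hr'⟩ := hXF A hA
    obtain ⟨c, d, hcd, hd, hc, hd'⟩ := hYF A hA
    have hA' : A = ⟨X l, X r, Y c, Y d⟩ := by rw [hl, hr', hc, hd']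
    have hbigA := hbig A hA
    rw [hA'] at hbigA ⊢
    exact exists_dyadicRect_le_abs_inc f hX hY hlr hr hcd hd hv hbigA
  choose! ux jx uy jy hux huy hjx hjy hDA hbigD using hpiece
  have hinj : ∀ A ∈ F, ∀ A' ∈ F, (ux A, uy A) = (ux A', uy A') →
      (jx A, jy A) = (jx A', jy A') → A = A' := by
    intro A hA A' hA' hu hj
    simp only [Prod.mk.injEq] at hu hj
    obtain ⟨z, hz⟩ := Rect.openSet_nonempty_of_inc_ne_zero (dyadicRect_valid hX hY _ _ _ _)
      (abs_pos.1 ((by positivity : (0 : ℝ) < v / (2 * U + 2) ^ 2).trans_le (hbigD A hA)))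
    refine hdisj.elim_set hA hA' z (hDA A hA hz) ?_
    rw [hu.1, hu.2, hj.1, hj.2] at hz
    exact hDA A' hA' hz
  set levels := Finset.range (U + 1) ×ˢ Finset.range (U + 1)
  have hfiber : ∀ σ ∈ levels, ∑ A ∈ F with (ux A, uy A) = σ,
      ENNReal.ofReal |(dyadicRect X Y (ux A) (jx A) (uy A) (jy A)).inc f| ^ p ≤
        gridVarSum p f R := by
    intro σ hσ
    simp only [levels, Finset.mem_product, Finset.mem_range] at hσ
    calc _ = ∑ A ∈ F with (ux A, uy A) = σ,
          ENNReal.ofReal |(dyadicRect X Y σ.1 (jx A) σ.2 (jy A)).inc f| ^ p :=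
          Finset.sum_congr rfl fun A hA => by rw [← (Finset.mem_filter.1 hA).2]
      _ = ∑ j ∈ (F.filter fun A => (ux A, uy A) = σ).image fun A => (jx A, jy A),
          ENNReal.ofReal |(dyadicRect X Y σ.1 j.1 σ.2 j.2).inc f| ^ p := by
        rw [Finset.sum_image fun A hA A' hA' hj => ?_]
        rw [Finset.mem_coe, Finset.mem_filter] at hA hA'
        exact hinj A hA.1 A' hA'.1 (hA.2.trans hA'.2.symm) hj
      _ ≤ gridVarSum p f R := by
        refine sum_dyadicRect_le_gridVarSum p f R hX hY (by omega) (by omega) hX₀ hXU hY₀ hYU _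
          fun j hj => ?_
        obtain ⟨A, hA, rfl⟩ := Finset.mem_image.1 hj
        obtain ⟨hAF, rfl⟩ := Finset.mem_filter.1 hA
        exact ⟨hjx A hAF, hjy A hAF⟩
  calc (F.card : ℝ≥0∞) * ENNReal.ofReal (v / (2 * U + 2) ^ 2) ^ p
      = ∑ _A ∈ F, ENNReal.ofReal (v / (2 * U + 2) ^ 2) ^ p := by
        rw [Finset.sum_const, nsmul_eq_mul]
    _ ≤ ∑ A ∈ F, ENNReal.ofReal |(dyadicRect X Y (ux A) (jx A) (uy A) (jy A)).inc f| ^ p :=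
        Finset.sum_le_sum fun A hA =>
          ENNReal.rpow_le_rpow (ENNReal.ofReal_le_ofReal (hbigD A hA)) hp
    _ = ∑ σ ∈ levels, ∑ A ∈ F with (ux A, uy A) = σ,
          ENNReal.ofReal |(dyadicRect X Y (ux A) (jx A) (uy A) (jy A)).inc f| ^ p :=
        (Finset.sum_fiberwise_of_maps_to (fun A hA => by
          simp only [levels, Finset.mem_product, Finset.mem_range]
          exact ⟨by have := hux A hA; omega, by have := huy A hA; omega⟩) _).symm
    _ ≤ ∑ _σ ∈ levels, gridVarSum p f R := Finset.sum_le_sum hfiber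
    _ = ((U + 1) ^ 2 : ℕ) * gridVarSum p f R := by
        rw [Finset.sum_const, nsmul_eq_mul, Finset.card_product, Finset.card_range, sq]

theorem exists_log_add_rpow_le (α : ℝ) {θ : ℝ} (hθ : 0 < θ) :
    ∃ C : ℝ, ∀ N : ℕ, N ≠ 0 → ((Nat.log 2 N : ℝ) + 3) ^ α ≤ C * (N : ℝ) ^ θ := by
  set k := ⌈α⌉₊
  set ρ : ℝ := 2 ^ θ
  have hρ : 1 < ρ := Real.one_lt_rpow one_lt_two hθ
  have hlim : Filter.Tendsto (fun L : ℕ => ((L + 3 : ℕ) : ℝ) ^ k / ρ ^ (L + 3)) Filter.atTop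
      (nhds 0) :=
    (tendsto_pow_const_div_const_pow_of_one_lt k hρ).comp (Filter.tendsto_add_atTop_nat 3)
  obtain ⟨C, hC⟩ := hlim.bddAbove_range
  have hC₀ : 0 ≤ C := (by positivity : (0 : ℝ) ≤ ((0 + 3 : ℕ) : ℝ) ^ k / ρ ^ (0 + 3)).trans
    (hC ⟨0, rfl⟩)
  refine ⟨C * ρ ^ 3, fun N hN => ?_⟩
  set L := Nat.log 2 N
  have hpoly : ((L : ℝ) + 3) ^ k ≤ C * ρ ^ (L + 3) := by
    have := hC ⟨L, rfl⟩
    push_cast at this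
    rwa [div_le_iff₀ (by positivity)] at this
  have hexp : ρ ^ L ≤ (N : ℝ) ^ θ := by
    rw [Real.rpow_pow_comm zero_le_two]
    gcongr
    exact_mod_cast Nat.pow_log_le_self 2 hN
  calc ((L : ℝ) + 3) ^ α ≤ ((L : ℝ) + 3) ^ (k : ℝ) :=
        Real.rpow_le_rpow_of_exponent_le (by linarith [L.cast_nonneg (α := ℝ)]) (Nat.le_ceil α)
    _ = ((L : ℝ) + 3) ^ k := Real.rpow_natCast _ _
    _ ≤ C * ρ ^ (L + 3) := hpoly
    _ = C * ρ ^ 3 * ρ ^ L := by ring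
    _ ≤ C * ρ ^ 3 * (N : ℝ) ^ θ := by gcongr

theorem le_rpow_of_le_mul_rpow {x K δ : ℝ} (hx : 0 < x) (hδ : δ < 1) (h : x ≤ K * x ^ δ) :
    x ≤ K ^ (1 / (1 - δ)) := by
  have hxδ : 0 < x ^ δ := Real.rpow_pos_of_pos hx δ
  have hK : x ^ (1 - δ) ≤ K := by
    rwa [Real.rpow_sub hx, Real.rpow_one, div_le_iff₀ hxδ]
  calc x = (x ^ (1 - δ)) ^ (1 / (1 - δ)) := by
        rw [← Real.rpow_mul hx.le, mul_one_div_cancel (by linarith), Real.rpow_one]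
    _ ≤ K ^ (1 / (1 - δ)) :=
        Real.rpow_le_rpow (Real.rpow_nonneg hx.le _) hK (by rw [one_div_nonneg]; linarith)

/-- With `U = log₂ N + 2`, `card_mul_le_gridVarSum` gives `N v^p ≲ (log N)^(2+2p) g^p`, and the
logarithm is absorbed by `N^(1 - p/r)`. -/
theorem exists_card_le_of_le_abs_inc {p r : ℝ} (hp : 0 < p) (hpr : p < r) :
    ∃ C : ℝ, 0 ≤ C ∧ ∀ (f : ℝ × ℝ → ℝ) (R : Rect), R.Valid → ∀ g : ℝ, 0 ≤ g →
      gridVarSum p f R ≤ ENNReal.ofReal (g ^ p) → ∀ F : Finset Rect,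
      (∀ A ∈ F, A.Valid ∧ A.toSet ⊆ R.toSet) → (F : Set Rect).PairwiseDisjoint Rect.openSet →
      ∀ v : ℝ, 0 < v → (∀ A ∈ F, v ≤ |A.inc f|) → (F.card : ℝ) ≤ C * (g / v) ^ r := by
  have hr : 0 < r := hp.trans hpr
  set δ := 1 - p / r
  have hδ : 0 < δ := by rw [sub_pos, div_lt_one hr]; exact hpr
  have hδ' : 1 / (1 - δ) = r / p := by simp only [δ, sub_sub_cancel, one_div_div]
  obtain ⟨C₀, hC₀⟩ := exists_log_add_rpow_le (2 + 2 * p) hδ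
  have hC₀pos : 0 ≤ C₀ := by
    have h := hC₀ 1 one_ne_zero
    rw [Nat.log_one_right, Nat.cast_one, Real.one_rpow, mul_one] at h
    exact (Real.rpow_nonneg (by positivity) _).trans h
  refine ⟨(4 ^ p * C₀) ^ (r / p), by positivity, ?_⟩
  intro f R hR g hg hG F hF hdisj v hv hbig
  rcases Nat.eq_zero_or_pos F.card with hN | hN
  · rw [hN, Nat.cast_zero]; positivity
  set N := F.card
  set L := Nat.log 2 N
  set W : ℝ := L + 3
  have hU : 2 * N + 2 ≤ 2 ^ (L + 2) := by
    have : N < 2 ^ (L + 1) := Nat.lt_pow_succ_log_self one_lt_two N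
    rw [pow_succ] at this
    rw [pow_succ, pow_succ]
    omega
  have hcount : (N : ℝ) * (v / (2 * W) ^ 2) ^ p ≤ W ^ 2 * g ^ p := by
    have h := (card_mul_le_gridVarSum hp.le f hR hF hdisj hv hbig hU).trans
      (mul_le_mul' le_rfl hG)
    rw [← ENNReal.ofReal_natCast, ENNReal.ofReal_rpow_of_nonneg (by positivity) hp.le,
      ← ENNReal.ofReal_mul (by positivity), ← ENNReal.ofReal_natCast,
      ← ENNReal.ofReal_mul (by positivity), ENNReal.ofReal_le_ofReal_iff (by positivity)] at h
    convert h using 3 <;> push_cast <;> ring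
  have hgrowth : (N : ℝ) ≤ (4 ^ p * C₀ * (g / v) ^ p) * (N : ℝ) ^ δ := by
    have hsplit : (2 * W) ^ 2 = 4 * W ^ 2 := by ring
    rw [hsplit, Real.div_rpow hv.le (by positivity), Real.mul_rpow (by norm_num) (by positivity),
      ← mul_div_assoc, div_le_iff₀ (by positivity)] at hcount
    calc (N : ℝ) = N * v ^ p / v ^ p := by field_simp
      _ ≤ W ^ 2 * g ^ p * (4 ^ p * (W ^ 2) ^ p) / v ^ p := by gcongr
      _ = 4 ^ p * W ^ (2 + 2 * p) * (g / v) ^ p := by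
        rw [Real.div_rpow hg hv.le, Real.rpow_add (by positivity), Real.rpow_mul (by positivity),
          Real.rpow_two]
        ring
      _ ≤ 4 ^ p * (C₀ * (N : ℝ) ^ δ) * (g / v) ^ p := by
        gcongr
        exact hC₀ N hN.ne'
      _ = (4 ^ p * C₀ * (g / v) ^ p) * (N : ℝ) ^ δ := by ring
  calc (N : ℝ) ≤ (4 ^ p * C₀ * (g / v) ^ p) ^ (1 / (1 - δ)) :=
        le_rpow_of_le_mul_rpow (by exact_mod_cast hN) (sub_lt_self 1 (div_pos hp hr)) hgrowth
    _ = (4 ^ p * C₀) ^ (r / p) * (g / v) ^ r := by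
        rw [hδ', Real.mul_rpow (by positivity) (by positivity), ← Real.rpow_mul (by positivity),
          mul_div_cancel₀ r hp.ne']

theorem two_pow_log_floor_le_and_lt {x : ℝ} (hx : 1 ≤ x) :
    (2 : ℝ) ^ Nat.log 2 ⌊x⌋₊ ≤ x ∧ x < 2 ^ (Nat.log 2 ⌊x⌋₊ + 1) := by
  have hfloor : ⌊x⌋₊ ≠ 0 := (Nat.floor_pos.2 hx).ne'
  constructor
  · calc (2 : ℝ) ^ Nat.log 2 ⌊x⌋₊ ≤ (⌊x⌋₊ : ℝ) := by
          exact_mod_cast Nat.pow_log_le_self 2 hfloor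
      _ ≤ x := Nat.floor_le (by linarith)
  · calc x < ⌊x⌋₊ + 1 := Nat.lt_floor_add_one x
      _ ≤ (2 : ℝ) ^ (Nat.log 2 ⌊x⌋₊ + 1) := by
          exact_mod_cast Nat.lt_pow_succ_log_self one_lt_two _

theorem sum_rpow_le_of_card_le {ι : Type*} (s : Finset ι) (a : ι → ℝ) {g C r q : ℝ}
    (hr : 0 < r) (hrq : r < q) (hC : 0 ≤ C) (hg : 0 ≤ g) (ha : ∀ i ∈ s, 0 ≤ a i ∧ a i ≤ g)
    (hcard : ∀ v, 0 < v → ((s.filter fun i => v ≤ a i).card : ℝ) ≤ C * (g / v) ^ r) :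
    ∑ i ∈ s, a i ^ q ≤ C * 2 ^ r / (1 - 2 ^ (r - q)) * g ^ q := by
  classical
  have hq : 0 < q := hr.trans hrq
  set ρ : ℝ := 2 ^ (r - q)
  have hρ : ρ < 1 := Real.rpow_lt_one_of_one_lt_of_neg one_lt_two (by linarith)
  set s' := s.filter fun i => 0 < a i
  have hpos : ∑ i ∈ s, a i ^ q = ∑ i ∈ s', a i ^ q := by
    refine (Finset.sum_filter_of_ne fun i hi hne => ?_).symm
    refine (ha i hi).1.lt_of_ne fun h0 => hne ?_
    rw [← h0, Real.zero_rpow hq.ne']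
  let level : ι → ℕ := fun i => Nat.log 2 ⌊g / a i⌋₊
  have hlevel : ∀ i ∈ s', g / 2 ^ (level i + 1) < a i ∧ a i ≤ g / 2 ^ level i := by
    intro i hi
    obtain ⟨hi, hai⟩ := Finset.mem_filter.1 hi
    obtain ⟨h₁, h₂⟩ := two_pow_log_floor_le_and_lt ((one_le_div hai).2 (ha i hi).2)
    rw [le_div_iff₀ hai] at h₁
    rw [div_lt_iff₀ hai] at h₂
    exact ⟨(div_lt_iff₀ (by positivity)).2 (by linarith),
      (le_div_iff₀ (by positivity)).2 (by linarith)⟩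
  have hk : ∀ k, ∑ i ∈ s' with level i = k, a i ^ q ≤ C * 2 ^ r * g ^ q * ρ ^ k := by
    intro k
    rcases (s'.filter fun i => level i = k).eq_empty_or_nonempty with ht | ⟨i, hi⟩
    · rw [ht, Finset.sum_empty]; positivity
    have hg₀ : 0 < g := by
      obtain ⟨hi, -⟩ := Finset.mem_filter.1 hi
      exact (Finset.mem_filter.1 hi).2.trans_le (ha i (Finset.mem_filter.1 hi).1).2
    have hsub : (s'.filter fun i => level i = k) ⊆ s.filter fun i => g / 2 ^ (k + 1) ≤ a i := by
      intro j hj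
      obtain ⟨hjs, rfl⟩ := Finset.mem_filter.1 hj
      exact Finset.mem_filter.2 ⟨(Finset.mem_filter.1 hjs).1, (hlevel j hjs).1.le⟩
    calc ∑ i ∈ s' with level i = k, a i ^ q ≤ ∑ i ∈ s' with level i = k, (g / 2 ^ k) ^ q := by
          refine Finset.sum_le_sum fun j hj => ?_
          obtain ⟨hjs, rfl⟩ := Finset.mem_filter.1 hj
          exact Real.rpow_le_rpow (ha j (Finset.mem_filter.1 hjs).1).1 (hlevel j hjs).2 hq.le
      _ = (s'.filter fun i => level i = k).card * (g / 2 ^ k) ^ q := by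
          rw [Finset.sum_const, nsmul_eq_mul]
      _ ≤ C * (2 ^ (k + 1)) ^ r * (g / 2 ^ k) ^ q := by
          gcongr
          calc ((s'.filter fun i => level i = k).card : ℝ)
              ≤ (s.filter fun i => g / 2 ^ (k + 1) ≤ a i).card := by
                exact_mod_cast Finset.card_le_card hsub
            _ ≤ C * (g / (g / 2 ^ (k + 1))) ^ r := hcard _ (by positivity)
            _ = C * (2 ^ (k + 1)) ^ r := by rw [div_div_cancel₀ hg₀.ne']
      _ = C * 2 ^ r * g ^ q * ρ ^ k := by
          rw [Real.div_rpow hg₀.le (by positivity), ← Real.rpow_pow_comm zero_le_two,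
            ← Real.rpow_pow_comm zero_le_two, show ρ = 2 ^ r / 2 ^ q from Real.rpow_sub two_pos r q,
            div_pow, pow_succ]
          field_simp
  set K := s'.sup level + 1
  have hmaps : ∀ i ∈ s', level i ∈ Finset.range K := fun i hi =>
    Finset.mem_range.2 (Nat.lt_succ_of_le (Finset.le_sup hi))
  calc ∑ i ∈ s, a i ^ q = ∑ k ∈ Finset.range K, ∑ i ∈ s' with level i = k, a i ^ q := by
        rw [hpos, Finset.sum_fiberwise_of_maps_to hmaps]
    _ ≤ ∑ k ∈ Finset.range K, C * 2 ^ r * g ^ q * ρ ^ k := Finset.sum_le_sum fun k _ => hk k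
    _ = C * 2 ^ r * g ^ q * ∑ k ∈ Finset.range K, ρ ^ k := by rw [Finset.mul_sum]
    _ ≤ C * 2 ^ r * g ^ q * (ρ ^ 0 / (1 - ρ)) := by
        gcongr
        rw [Finset.range_eq_Ico]
        exact geom_sum_Ico_le_of_lt_one (Real.rpow_nonneg zero_le_two _) hρ
    _ = C * 2 ^ r / (1 - ρ) * g ^ q := by ring

theorem exists_cVarSum_le {p q : ℝ} (hp : 0 < p) (hpq : p < q) :
    ∃ K : ℝ, 0 ≤ K ∧ ∀ (f : ℝ × ℝ → ℝ) (R : Rect), R.Valid → ∀ g : ℝ, 0 ≤ g →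
      gridVarSum p f R ≤ ENNReal.ofReal (g ^ p) → cVarSum q f R ≤ ENNReal.ofReal (K * g ^ q) := by
  obtain ⟨r, hpr, hrq⟩ := exists_between hpq
  have hr : 0 < r := hp.trans hpr
  obtain ⟨C, hC, hcount⟩ := exists_card_le_of_le_abs_inc hp hpr
  have hρ : (2 : ℝ) ^ (r - q) < 1 := Real.rpow_lt_one_of_one_lt_of_neg one_lt_two (by linarith)
  refine ⟨C * 2 ^ r / (1 - 2 ^ (r - q)), div_nonneg (by positivity) (by linarith), ?_⟩
  intro f R hR g hg hG
  refine iSup₂_le fun P ⟨hval, hdisj, hcover⟩ => ?_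
  have hsub : ∀ Q ∈ P, Q.toSet ⊆ R.toSet := fun Q hQ => hcover ▸ subset_biUnion_of_mem hQ
  have hle : ∀ Q ∈ P, |Q.inc f| ≤ g := fun Q hQ => by
    have h := (rpow_abs_inc_le_gridVarSum p f (hval Q hQ) (hsub Q hQ)).trans hG
    rw [ENNReal.ofReal_rpow_of_nonneg (abs_nonneg _) hp.le,
      ENNReal.ofReal_le_ofReal_iff (by positivity)] at h
    exact (Real.rpow_le_rpow_iff (abs_nonneg _) hg hp).1 h
  have hsum := sum_rpow_le_of_card_le P (fun Q => |Q.inc f|) hr hrq hC hg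
    (fun Q hQ => ⟨abs_nonneg _, hle Q hQ⟩) fun v hv =>
      hcount f R hR g hg hG _
        (fun A hA => ⟨hval A (Finset.mem_filter.1 hA).1, hsub A (Finset.mem_filter.1 hA).1⟩)
        (hdisj.mono (Finset.coe_subset.2 (Finset.filter_subset _ _))) v hv
        fun A hA => (Finset.mem_filter.1 hA).2
  calc ∑ Q ∈ P, ENNReal.ofReal |Q.inc f| ^ q = ENNReal.ofReal (∑ Q ∈ P, |Q.inc f| ^ q) := by
        rw [ENNReal.ofReal_sum_of_nonneg fun Q _ => by positivity]
        exact Finset.sum_congr rfl fun Q _ =>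
          ENNReal.ofReal_rpow_of_nonneg (abs_nonneg _) (hp.trans hpq).le
    _ ≤ ENNReal.ofReal (C * 2 ^ r / (1 - 2 ^ (r - q)) * g ^ q) := ENNReal.ofReal_le_ofReal hsum

/-- for every `p ≥ 1` and `ε > 0` there is `c = c(p,ε) ≥ 1` with
`|f|_{(p+ε)-var;R} ≤ c · V_p(f;R)` for every `f` and every rectangle `R ⊆ [0,T]²`. -/
theorem controlled_var_le_const_mul_grid_var (p ε : ℝ) (hp : 1 ≤ p) (hε : 0 < ε) :
    ∃ c : ℝ, 1 ≤ c ∧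
      ∀ (T : ℝ), 0 < T → ∀ (f : ℝ × ℝ → ℝ) (R : Rect), R.Valid →
        R.toSet ⊆ (Rect.mk 0 T 0 T).toSet →
        cVarSum (p + ε) f R ^ (1 / (p + ε)) ≤
          ENNReal.ofReal c * gridVarSum p f R ^ (1 / p) := by
  have hp₀ : 0 < p := by linarith
  have hq₀ : 0 < p + ε := by linarith
  obtain ⟨K, hK, hcVar⟩ := exists_cVarSum_le hp₀ (q := p + ε) (by linarith)
  refine ⟨max 1 (K ^ (1 / (p + ε))), le_max_left _ _, fun T _ f R hR _ => ?_⟩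
  by_cases hG : gridVarSum p f R = ⊤
  · rw [hG, ENNReal.top_rpow_of_pos (by positivity), ENNReal.mul_top (by simp)]
    exact le_top
  set g := (gridVarSum p f R).toReal ^ (1 / p)
  have hg : 0 ≤ g := by positivity
  have hGg : gridVarSum p f R = ENNReal.ofReal (g ^ p) := by
    rw [← Real.rpow_mul ENNReal.toReal_nonneg, one_div_mul_cancel hp₀.ne', Real.rpow_one,
      ENNReal.ofReal_toReal hG]
  calc cVarSum (p + ε) f R ^ (1 / (p + ε))
      ≤ ENNReal.ofReal (K * g ^ (p + ε)) ^ (1 / (p + ε)) :=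
        ENNReal.rpow_le_rpow (hcVar f R hR g hg hGg.le) (by positivity)
    _ = ENNReal.ofReal (K ^ (1 / (p + ε))) * ENNReal.ofReal g := by
        rw [ENNReal.ofReal_rpow_of_nonneg (by positivity) (by positivity),
          Real.mul_rpow hK (by positivity), ← Real.rpow_mul hg, mul_one_div_cancel hq₀.ne',
          Real.rpow_one, ENNReal.ofReal_mul (by positivity)]
    _ ≤ ENNReal.ofReal (max 1 (K ^ (1 / (p + ε)))) * gridVarSum p f R ^ (1 / p) := by
        rw [hGg, ENNReal.ofReal_rpow_of_nonneg (by positivity) (by positivity), ← Real.rpow_mul hg,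
          mul_one_div_cancel hp₀.ne', Real.rpow_one]
        gcongr
        exact le_max_right _ _
end

section
/- Let H ∈ (0,1/2] and C^H(s,t) := (1/2)(t^{2H} + s^{2H} − |t−s|^{2H}) on [0,T]^2 (the covariance of fractional Brownian motion). Then C^H has finite (1/(2H))-variation in the 2D grid sense and moreover V_{1/(2H)}(C^H; [s,t]^2) ≤ c_H |t−s|^{2H} for a constant c_H depending only on H. -/
open Set
open scoped ENNReal NNReal

/-- The covariance of fractional Brownian motion with Hurst parameter `H`:
`C^H(s,t) = (1/2)(t^{2H} + s^{2H} - |t-s|^{2H})`. -/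
noncomputable def fbmCov (H : ℝ) : ℝ × ℝ → ℝ :=
  fun x => (x.2 ^ (2 * H) + x.1 ^ (2 * H) - |x.2 - x.1| ^ (2 * H)) / 2

/-!
Write `α = 2H ≤ 1`. The increment of `C^H` over `[a,b] × [c,d]` is `φ(d) - φ(c)` with
`φ(y) = (|y - a|^α - |y - b|^α) / 2`. It is at most `(b - a)^α` in absolute value, nonpositive
when `[c,d]` lies outside `[a,b]` (concavity of `x ↦ x^α`), and nonnegative when `[c,d] ⊆ [a,b]`.
Splitting `[c,d]` at `a` and `b` therefore gives `|φ(d) - φ(c)| ≤ φ(c) - φ(d) + 2 (φ(d') - φ(c'))`,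
where `c', d'` are the projections of `c, d` onto `[a,b]`, and both terms telescope along a
dissection: in each row `[a,b]` of a grid the increments have absolute sum at most `3 (b - a)^α`.
Since each of them is at most `(b - a)^α`, their `1/α`-th powers sum to at most `3 (b - a)`, and
summing over the rows bounds the grid `1/α`-variation over `[s,t]²`, raised to the power `1/α`,
by `3 (t - s)`.
-/

theorem Fin.sum_univ_succ_sub_castSucc {M : Type*} [AddCommGroup M] {n : ℕ}
    (f : Fin (n + 1) → M) :
    ∑ i : Fin n, (f i.succ - f i.castSucc) = f (Fin.last n) - f 0 := by
  induction n with
  | zero => simp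
  | succ n ih =>
    rw [Fin.sum_univ_castSucc]
    simp only [Fin.succ_castSucc]
    rw [ih (fun i => f i.castSucc), Fin.succ_last, Fin.castSucc_zero]
    abel

theorem Finset.sum_rpow_le_rpow_sub_one_mul_sum {ι : Type*} (s : Finset ι) {x : ι → ℝ}
    {B p : ℝ} (hp : 1 ≤ p) (hx : ∀ i ∈ s, 0 ≤ x i) (hxB : ∀ i ∈ s, x i ≤ B) :
    ∑ i ∈ s, x i ^ p ≤ B ^ (p - 1) * ∑ i ∈ s, x i := by
  rw [Finset.mul_sum]
  refine Finset.sum_le_sum fun i hi => ?_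
  calc x i ^ p = x i ^ (p - 1) * x i := by
        rw [← Real.rpow_add_one' (hx i hi) (by linarith), sub_add_cancel]
    _ ≤ B ^ (p - 1) * x i :=
        mul_le_mul_of_nonneg_right (Real.rpow_le_rpow (hx i hi) (hxB i hi) (by linarith))
          (hx i hi)

theorem ConcaveOn.add_le_add_of_add_eq {s : Set ℝ} {f : ℝ → ℝ} (hf : ConcaveOn ℝ s f)
    {a b c d : ℝ} (ha : a ∈ s) (hb : b ∈ s) (hac : a ≤ c) (hcb : c ≤ b)
    (habcd : a + b = c + d) :
    f a + f b ≤ f c + f d := by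
  rcases (hac.trans hcb).eq_or_lt with rfl | hab
  · obtain rfl : c = a := le_antisymm hcb hac
    obtain rfl : d = c := by linarith
    rfl
  have hba : 0 < b - a := sub_pos.2 hab
  set l := (b - c) / (b - a)
  set m := (c - a) / (b - a)
  have hl : 0 ≤ l := div_nonneg (by linarith) hba.le
  have hm : 0 ≤ m := div_nonneg (by linarith) hba.le
  have hlm : l + m = 1 := by simp only [l, m]; field_simp; ring
  have hc : l • a + m • b = c := by simp only [smul_eq_mul, l, m]; field_simp; ring
  have hd : m • a + l • b = d := by
    simp only [smul_eq_mul, l, m]; field_simp; linear_combination (b - a) * habcd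
  have h₁ := hf.2 ha hb hl hm hlm
  have h₂ := hf.2 ha hb hm hl (by rw [add_comm, hlm])
  rw [hc] at h₁
  rw [hd] at h₂
  simp only [smul_eq_mul] at h₁ h₂
  calc f a + f b = (l + m) * (f a + f b) := by rw [hlm, one_mul]
    _ = (l * f a + m * f b) + (m * f a + l * f b) := by ring
    _ ≤ f c + f d := add_le_add h₁ h₂

theorem Real.abs_rpow_sub_rpow_le {p x y : ℝ} (hp0 : 0 ≤ p) (hp1 : p ≤ 1) (hx : 0 ≤ x)
    (hy : 0 ≤ y) : |x ^ p - y ^ p| ≤ |x - y| ^ p := by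
  wlog hyx : y ≤ x generalizing x y
  · rw [abs_sub_comm, abs_sub_comm x]
    exact this hy hx (le_of_not_ge hyx)
  have hsub : x ^ p ≤ (x - y) ^ p + y ^ p := by
    simpa using Real.rpow_add_le_add_rpow (sub_nonneg.2 hyx) hy hp0 hp1
  rw [abs_of_nonneg (sub_nonneg.2 hyx),
    abs_of_nonneg (sub_nonneg.2 (Real.rpow_le_rpow hy hyx hp0))]
  linarith

theorem sub_eq_sub_min_add_sub_clamp_add_sub_max (g : ℝ → ℝ) {a b : ℝ} (hab : a ≤ b)
    (c d : ℝ) :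
    g d - g c = (g (min d a) - g (min c a)) + (g (max a (min d b)) - g (max a (min c b)))
      + (g (max d b) - g (max c b)) := by
  have split : ∀ y, g y = g (min y a) + g (max a (min y b)) + g (max y b) - g a - g b := by
    intro y
    rcases le_total y a with hya | hay
    · rw [min_eq_left hya, min_eq_left (hya.trans hab), max_eq_left hya,
        max_eq_right (hya.trans hab)]
      ring
    rcases le_total y b with hyb | hby
    · rw [min_eq_right hay, min_eq_left hyb, max_eq_right hay, max_eq_right hyb]
      ring
    · rw [min_eq_right hay, min_eq_right hby, max_eq_right hab, max_eq_left hby]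
      ring
  rw [split c, split d]
  ring

/-- Up to a term independent of `y`, this is `E[(β_b - β_a) β_y]` for an fBM `β` of Hurst
parameter `α / 2`. -/
noncomputable def fbmIncCov (α a b y : ℝ) : ℝ := (|y - a| ^ α - |y - b| ^ α) / 2

theorem fbmCov_inc (H a b c d : ℝ) :
    Rect.inc (fbmCov H) ⟨a, b, c, d⟩ = fbmIncCov (2 * H) a b d - fbmIncCov (2 * H) a b c := by
  simp only [Rect.inc, fbmCov, fbmIncCov]
  ring

section fbmIncCov

variable {α a b : ℝ}

theorem abs_fbmIncCov_le (hα0 : 0 ≤ α) (hα1 : α ≤ 1) (hab : a ≤ b) (y : ℝ) :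
    |fbmIncCov α a b y| ≤ (b - a) ^ α / 2 := by
  have hdist : |(|y - a| - |y - b|)| ≤ b - a := by
    simpa [abs_of_nonneg (sub_nonneg.2 hab)] using abs_abs_sub_abs_le_abs_sub (y - a) (y - b)
  rw [fbmIncCov, abs_div, abs_two]
  gcongr
  exact (Real.abs_rpow_sub_rpow_le hα0 hα1 (abs_nonneg _) (abs_nonneg _)).trans
    (Real.rpow_le_rpow (abs_nonneg _) hdist hα0)

theorem abs_fbmIncCov_sub_le (hα0 : 0 ≤ α) (hα1 : α ≤ 1) (hab : a ≤ b) (c d : ℝ) :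
    |fbmIncCov α a b d - fbmIncCov α a b c| ≤ (b - a) ^ α := by
  have hc := abs_fbmIncCov_le hα0 hα1 hab c
  have hd := abs_fbmIncCov_le hα0 hα1 hab d
  calc _ ≤ |fbmIncCov α a b d| + |fbmIncCov α a b c| := abs_sub _ _
    _ ≤ (b - a) ^ α := by linarith

theorem fbmIncCov_sub_nonneg (hα0 : 0 ≤ α) {c d : ℝ} (hac : a ≤ c) (hcd : c ≤ d)
    (hdb : d ≤ b) : 0 ≤ fbmIncCov α a b d - fbmIncCov α a b c := by
  have hca : (c - a) ^ α ≤ (d - a) ^ α := Real.rpow_le_rpow (by linarith) (by linarith) hα0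
  have hbd : (b - d) ^ α ≤ (b - c) ^ α := Real.rpow_le_rpow (by linarith) (by linarith) hα0
  rw [fbmIncCov, fbmIncCov, abs_of_nonneg (by linarith : 0 ≤ d - a),
    abs_of_nonneg (by linarith : 0 ≤ c - a), abs_sub_comm d, abs_sub_comm c,
    abs_of_nonneg (by linarith : 0 ≤ b - d), abs_of_nonneg (by linarith : 0 ≤ b - c)]
  linarith

theorem fbmIncCov_sub_nonpos_of_le_left (hα0 : 0 ≤ α) (hα1 : α ≤ 1) (hab : a ≤ b) {c d : ℝ}
    (hcd : c ≤ d) (hda : d ≤ a) : fbmIncCov α a b d - fbmIncCov α a b c ≤ 0 := by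
  have hconc := (Real.concaveOn_rpow hα0 hα1).add_le_add_of_add_eq
    (a := a - d) (b := b - c) (c := a - c) (d := b - d)
    (sub_nonneg.2 hda) (by simp only [mem_Ici]; linarith) (by linarith) (by linarith) (by ring)
  rw [fbmIncCov, fbmIncCov, abs_sub_comm d, abs_sub_comm d, abs_sub_comm c, abs_sub_comm c,
    abs_of_nonneg (by linarith : 0 ≤ a - d), abs_of_nonneg (by linarith : 0 ≤ b - d),
    abs_of_nonneg (by linarith : 0 ≤ a - c), abs_of_nonneg (by linarith : 0 ≤ b - c)]
  linarith

theorem fbmIncCov_sub_nonpos_of_right_le (hα0 : 0 ≤ α) (hα1 : α ≤ 1) (hab : a ≤ b) {c d : ℝ}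
    (hbc : b ≤ c) (hcd : c ≤ d) : fbmIncCov α a b d - fbmIncCov α a b c ≤ 0 := by
  have hconc := (Real.concaveOn_rpow hα0 hα1).add_le_add_of_add_eq
    (a := c - b) (b := d - a) (c := d - b) (d := c - a)
    (sub_nonneg.2 hbc) (by simp only [mem_Ici]; linarith) (by linarith) (by linarith) (by ring)
  rw [fbmIncCov, fbmIncCov, abs_of_nonneg (by linarith : 0 ≤ d - a),
    abs_of_nonneg (by linarith : 0 ≤ d - b), abs_of_nonneg (by linarith : 0 ≤ c - a),
    abs_of_nonneg (by linarith : 0 ≤ c - b)]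
  linarith

theorem abs_fbmIncCov_sub_le_clamp (hα0 : 0 ≤ α) (hα1 : α ≤ 1) (hab : a ≤ b) {c d : ℝ}
    (hcd : c ≤ d) :
    |fbmIncCov α a b d - fbmIncCov α a b c| ≤ (fbmIncCov α a b c - fbmIncCov α a b d) +
      2 * (fbmIncCov α a b (max a (min d b)) - fbmIncCov α a b (max a (min c b))) := by
  have hsplit := sub_eq_sub_min_add_sub_clamp_add_sub_max (fbmIncCov α a b) hab c d
  have hleft := fbmIncCov_sub_nonpos_of_le_left hα0 hα1 hab (min_le_min_right a hcd)
    (min_le_right d a)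
  have hright := fbmIncCov_sub_nonpos_of_right_le hα0 hα1 hab (le_max_right c b)
    (max_le_max_right b hcd)
  have hinner := fbmIncCov_sub_nonneg (a := a) (b := b) hα0 (le_max_left _ _)
    (max_le_max_left a (min_le_min_right b hcd)) (max_le hab (min_le_right _ _))
  rw [abs_le']
  constructor <;> linarith

theorem sum_abs_fbmIncCov_sub_le (hα0 : 0 ≤ α) (hα1 : α ≤ 1) (hab : a ≤ b) {m : ℕ}
    {v : Fin (m + 1) → ℝ} (hv : Monotone v) :
    ∑ j : Fin m, |fbmIncCov α a b (v j.succ) - fbmIncCov α a b (v j.castSucc)| ≤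
      3 * (b - a) ^ α := by
  set φ := fbmIncCov α a b
  set ψ := fun y => φ (max a (min y b))
  calc ∑ j : Fin m, |φ (v j.succ) - φ (v j.castSucc)|
      ≤ ∑ j : Fin m, (-(φ (v j.succ) - φ (v j.castSucc)) +
          2 * (ψ (v j.succ) - ψ (v j.castSucc))) := by
        refine Finset.sum_le_sum fun j _ => ?_
        rw [neg_sub]
        exact abs_fbmIncCov_sub_le_clamp hα0 hα1 hab (hv Fin.castSucc_lt_succ.le)
    _ = -(φ (v (Fin.last m)) - φ (v 0)) + 2 * (ψ (v (Fin.last m)) - ψ (v 0)) := by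
        have hφ : ∑ j : Fin m, (φ (v j.succ) - φ (v j.castSucc)) = φ (v (Fin.last m)) - φ (v 0) :=
          Fin.sum_univ_succ_sub_castSucc (φ ∘ v)
        have hψ : ∑ j : Fin m, (ψ (v j.succ) - ψ (v j.castSucc)) = ψ (v (Fin.last m)) - ψ (v 0) :=
          Fin.sum_univ_succ_sub_castSucc (ψ ∘ v)
        rw [Finset.sum_add_distrib, Finset.sum_neg_distrib, ← Finset.mul_sum, hφ, hψ]
    _ ≤ (b - a) ^ α + 2 * (b - a) ^ α := by
        gcongr
        · exact (neg_le_abs _).trans (abs_fbmIncCov_sub_le hα0 hα1 hab _ _)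
        · exact (le_abs_self _).trans (abs_fbmIncCov_sub_le hα0 hα1 hab _ _)
    _ = 3 * (b - a) ^ α := by ring

theorem sum_abs_fbmIncCov_sub_rpow_le (hα0 : 0 < α) (hα1 : α ≤ 1) (hab : a ≤ b) {m : ℕ}
    {v : Fin (m + 1) → ℝ} (hv : Monotone v) :
    ∑ j : Fin m, |fbmIncCov α a b (v j.succ) - fbmIncCov α a b (v j.castSucc)| ^ (1 / α) ≤
      3 * (b - a) := by
  have hB : 0 ≤ (b - a) ^ α := Real.rpow_nonneg (sub_nonneg.2 hab) α
  calc _ ≤ ((b - a) ^ α) ^ (1 / α - 1) *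
        ∑ j : Fin m, |fbmIncCov α a b (v j.succ) - fbmIncCov α a b (v j.castSucc)| :=
        Finset.sum_rpow_le_rpow_sub_one_mul_sum _ (one_le_one_div hα0 hα1)
          (fun _ _ => abs_nonneg _) (fun _ _ => abs_fbmIncCov_sub_le hα0.le hα1 hab _ _)
    _ ≤ ((b - a) ^ α) ^ (1 / α - 1) * (3 * (b - a) ^ α) := by
        gcongr
        exact sum_abs_fbmIncCov_sub_le hα0.le hα1 hab hv
    _ = 3 * (b - a) := by
        rw [mul_left_comm, ← Real.rpow_add_one' hB (by simp [hα0.ne']), sub_add_cancel,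
          one_div, Real.rpow_rpow_inv (sub_nonneg.2 hab) hα0.ne']

theorem sum_sum_abs_fbmIncCov_sub_rpow_le (hα0 : 0 < α) (hα1 : α ≤ 1) {n m : ℕ}
    {u : Fin (n + 1) → ℝ} {v : Fin (m + 1) → ℝ} (hu : Monotone u) (hv : Monotone v) :
    ∑ i : Fin n, ∑ j : Fin m,
        |fbmIncCov α (u i.castSucc) (u i.succ) (v j.succ) -
          fbmIncCov α (u i.castSucc) (u i.succ) (v j.castSucc)| ^ (1 / α) ≤
      3 * (u (Fin.last n) - u 0) := by
  calc _ ≤ ∑ i : Fin n, 3 * (u i.succ - u i.castSucc) := Finset.sum_le_sum fun i _ =>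
        sum_abs_fbmIncCov_sub_rpow_le hα0 hα1 (hu Fin.castSucc_lt_succ.le) hv
    _ = 3 * (u (Fin.last n) - u 0) := by rw [← Finset.mul_sum, Fin.sum_univ_succ_sub_castSucc]

end fbmIncCov

theorem gridVarSum_fbmCov_le {H : ℝ} (hH0 : 0 < H) (hH : H ≤ 1 / 2) (a b c d : ℝ) :
    gridVarSum (1 / (2 * H)) (fbmCov H) ⟨a, b, c, d⟩ ≤ ENNReal.ofReal (3 * (b - a)) := by
  simp only [gridVarSum, iSup_le_iff]
  intro n m u v hu hv hu0 hun _ _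
  have hp : 0 ≤ 1 / (2 * H) := by positivity
  simp only [fbmCov_inc]
  calc _ = ENNReal.ofReal (∑ i : Fin n, ∑ j : Fin m,
        |fbmIncCov (2 * H) (u i.castSucc) (u i.succ) (v j.succ) -
          fbmIncCov (2 * H) (u i.castSucc) (u i.succ) (v j.castSucc)| ^ (1 / (2 * H))) := by
        rw [ENNReal.ofReal_sum_of_nonneg fun i _ => Finset.sum_nonneg fun j _ => by positivity]
        refine Finset.sum_congr rfl fun i _ => ?_
        rw [ENNReal.ofReal_sum_of_nonneg fun j _ => by positivity]
        exact Finset.sum_congr rfl fun j _ => ENNReal.ofReal_rpow_of_nonneg (abs_nonneg _) hp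
    _ ≤ ENNReal.ofReal (3 * (b - a)) := by
        refine ENNReal.ofReal_le_ofReal ?_
        have hgrid := sum_sum_abs_fbmIncCov_sub_rpow_le (α := 2 * H) (by positivity) (by linarith)
          hu hv
        rwa [hu0, hun] at hgrid

/-- for `H ∈ (0,1/2]`, the fBM covariance has finite grid
`1/(2H)`-variation; indeed `V_{1/(2H)}(C^H;[s,t]²) ≤ c_H |t-s|^{2H}`. -/
theorem fbmCov_grid_var_bound (H : ℝ) (hH0 : 0 < H) (hH : H ≤ 1 / 2) :
    ∃ cH : ℝ, 0 < cH ∧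
      ∀ (T s t : ℝ), 0 ≤ s → s ≤ t → t ≤ T →
        gridVarSum (1 / (2 * H)) (fbmCov H) (Rect.mk s t s t) ^ (2 * H) ≤
          ENNReal.ofReal (cH * (t - s) ^ (2 * H)) := by
  refine ⟨3 ^ (2 * H), by positivity, fun T s t _ hst _ => ?_⟩
  calc gridVarSum (1 / (2 * H)) (fbmCov H) ⟨s, t, s, t⟩ ^ (2 * H)
      ≤ ENNReal.ofReal (3 * (t - s)) ^ (2 * H) :=
        ENNReal.rpow_le_rpow (gridVarSum_fbmCov_le hH0 hH s t s t) (by positivity)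
    _ = ENNReal.ofReal (3 ^ (2 * H) * (t - s) ^ (2 * H)) := by
        rw [ENNReal.ofReal_rpow_of_nonneg (by linarith) (by positivity),
          Real.mul_rpow (by norm_num) (by linarith)]
end
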